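/- arXiv:1812.03456 — 2 statements merged into one kernel-verified Lean document; each statement's English description precedes it below -/
import Mathlib

section
/- In the simplex setting, for every real number λ, Δ² − λΔ = (1/h_m²) · ( Σ_{σ∈A_m} σ(Δ_{m−1}² − λ h_m Δ_{m−1}) + X_m ), where X_m = Σ_{σ∈A_m} ( σ(Δ_{m−1}) · Σ_{τ∈A_m, τ≠σ} τ(Δ_{m−1}) ) and h_m = (m−2)·(m−1)!/2. -/
/-!
Write `A σ = σ(Δ_{m-1})`. The squares `A σ ^ 2` together with the cross terms `X_m` make up
`(∑ σ, A σ) ^ 2`, so everything reduces to `∑ σ, σ(Δ_{m-1}) = h_m • Δ`. As `A_m` acts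
transitively on the edges of the simplex, the orbit sum `∑ σ, Δ_{σ e}` does not depend on the
edge `e`, and averaging it over all `C(m, 2)` edges gives `(|A_m| / C(m, 2)) • Δ`. Summing over
the `C(m - 1, 2)` edges of `Δ_{m-1}` produces the factor `C(m-1, 2) · (m!/2) / C(m, 2) = h_m`.
-/

noncomputable section
open scoped Classical

/-- The Laplacian `Δ = |S|·1 - Σ_{s ∈ S} s` in the real group algebra `ℝ[G]`. -/
def lap {G : Type*} [Group G] (S : Finset G) : MonoidAlgebra ℝ G :=
  (S.card : MonoidAlgebra ℝ G) - ∑ s ∈ S, MonoidAlgebra.of ℝ G s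

/-- The star involution on `ℝ[G]` induced by `g ↦ g⁻¹`. -/
def starG {G : Type*} [Group G] (x : MonoidAlgebra ℝ G) : MonoidAlgebra ℝ G :=
  MonoidAlgebra.ofCoeff (Finsupp.mapDomain (fun g => g⁻¹) x.coeff)

/-- `g` lies in the ball of radius `R` about the identity in the word metric
induced by the (symmetric) set `S`. -/
def inBall {G : Type*} [Group G] (S : Set G) (R : ℕ) (g : G) : Prop :=
  ∃ l : List G, (∀ x ∈ l, x ∈ S) ∧ l.length ≤ R ∧ l.prod = g

/-- `x ∈ Σ²_R ℝ[G]`: `x` is a finite sum of hermitian squares `ξ_i* ξ_i` with each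
`ξ_i` supported in the ball of radius `R` about the identity. -/
def SOS {G : Type*} [Group G] (S : Set G) (R : ℕ) (x : MonoidAlgebra ℝ G) : Prop :=
  ∃ (N : ℕ) (ξ : Fin N → MonoidAlgebra ℝ G),
    (∀ i, ∀ g ∈ (ξ i).coeff.support, inBall S R g) ∧
    x = ∑ i, starG (ξ i) * ξ i

/-- The simplex setting: a group `G` with a finite symmetric generating set `S`
(with `1 ∉ S`), an action of the alternating group `A_m` on `G` by automorphisms
preserving `S`, and an `A_m`-equivariant labelling of `S` by edges (2-element
subsets) of `{1,…,m}` such that generators with disjoint labels commute. -/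
structure SimplexSetting (m : ℕ) (G : Type*) [Group G] where
  S : Finset G
  one_not_mem : (1 : G) ∉ S
  symm : ∀ s ∈ S, s⁻¹ ∈ S
  generates : Subgroup.closure (S : Set G) = ⊤
  act : alternatingGroup (Fin m) →* MulAut G
  act_mem : ∀ (σ : alternatingGroup (Fin m)), ∀ s ∈ S, act σ s ∈ S
  lbl : G → Finset (Fin m)
  lbl_card : ∀ s ∈ S, (lbl s).card = 2
  lbl_equivariant : ∀ (σ : alternatingGroup (Fin m)), ∀ s ∈ S,
    lbl (act σ s) = (lbl s).image (σ : Equiv.Perm (Fin m))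
  comm : ∀ s ∈ S, ∀ t ∈ S, Disjoint (lbl s) (lbl t) → Commute s t

namespace SimplexSetting

variable {m : ℕ} {G : Type*} [Group G] (P : SimplexSetting m G)

/-- The set `E_n` of edges of the simplex spanned by the first `n` vertices. -/
def edges (m n : ℕ) : Finset (Finset (Fin m)) :=
  Finset.univ.filter (fun e => e.card = 2 ∧ ∀ i ∈ e, (i : ℕ) < n)

/-- `S_e`: the generators labelled by the edge `e`. -/
def Se (e : Finset (Fin m)) : Finset G := P.S.filter (fun s => P.lbl s = e)

/-- The edge Laplacian `Δ_e = |S_e|·1 - Σ_{t ∈ S_e} t`. -/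
def De (e : Finset (Fin m)) : MonoidAlgebra ℝ G :=
  ((P.Se e).card : MonoidAlgebra ℝ G) - ∑ t ∈ P.Se e, MonoidAlgebra.of ℝ G t

/-- `Δ_n = Σ_{e ∈ E_n} Δ_e`. -/
def Dn (n : ℕ) : MonoidAlgebra ℝ G := ∑ e ∈ edges m n, P.De e

/-- `Sq_n = Σ_{e ∈ E_n} Δ_e²`. -/
def Sq (n : ℕ) : MonoidAlgebra ℝ G := ∑ e ∈ edges m n, (P.De e) ^ 2

/-- `Adj_n`: the sum of `Δ_e Δ_f` over ordered pairs of edges of `E_n` sharing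
exactly one vertex. -/
def Adj (n : ℕ) : MonoidAlgebra ℝ G :=
  ∑ e ∈ edges m n, ∑ f ∈ (edges m n).filter (fun f => (e ∩ f).card = 1), P.De e * P.De f

/-- `Op_n`: the sum of `Δ_e Δ_f` over ordered pairs of disjoint edges of `E_n`. -/
def Op (n : ℕ) : MonoidAlgebra ℝ G :=
  ∑ e ∈ edges m n, ∑ f ∈ (edges m n).filter (fun f => e ∩ f = ∅), P.De e * P.De f

/-- The induced action of `A_m` on the group algebra `ℝ[G]`. -/
def algAct (σ : alternatingGroup (Fin m)) (x : MonoidAlgebra ℝ G) : MonoidAlgebra ℝ G :=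
  MonoidAlgebra.ofCoeff (Finsupp.mapDomain (P.act σ) x.coeff)

/-- `h_n = (n-2)·(n-1)!/2`, as a real number. -/
def hr (n : ℕ) : ℝ := ((n : ℝ) - 2) * (Nat.factorial (n - 1)) / 2

end SimplexSetting

open SimplexSetting

open scoped Pointwise

theorem Finset.sq_sum_eq_sum_sq_add_sum_mul_sum_erase {ι R : Type*} [Semiring R]
    [DecidableEq ι] (s : Finset ι) (f : ι → R) :
    (∑ i ∈ s, f i) ^ 2 = ∑ i ∈ s, f i ^ 2 + ∑ i ∈ s, f i * ∑ j ∈ s.erase i, f j := by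
  rw [sq, Finset.sum_mul, ← Finset.sum_add_distrib]
  refine Finset.sum_congr rfl fun i hi => ?_
  rw [← Finset.add_sum_erase s f hi, mul_add, sq]

theorem Finset.card_nsmul_sum_smul_of_subset_orbit {H α M : Type*} [Group H] [Fintype H]
    [MulAction H α] [AddCommMonoid M] {s : Finset α} (hs : ∀ g : H, ∀ y ∈ s, g • y ∈ s)
    {x : α} (hx : (s : Set α) ⊆ MulAction.orbit H x) (v : α → M) :
    s.card • ∑ g : H, v (g • x) = Fintype.card H • ∑ y ∈ s, v y := by
  have hbase : ∀ y ∈ s, ∑ g : H, v (g • y) = ∑ g : H, v (g • x) := by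
    intro y hy
    obtain ⟨h, rfl⟩ := hx hy
    exact Fintype.sum_equiv (Equiv.mulRight h) _ _ fun g => by simp [mul_smul]
  have hinv : ∀ g : H, ∑ y ∈ s, v (g • y) = ∑ y ∈ s, v y := fun g =>
    Finset.sum_nbij' (g • ·) (g⁻¹ • ·) (hs g) (hs g⁻¹) (fun y _ => inv_smul_smul g y)
      (fun y _ => smul_inv_smul g y) fun _ _ => rfl
  calc s.card • ∑ g : H, v (g • x) = ∑ y ∈ s, ∑ g : H, v (g • y) := by
        rw [Finset.sum_congr rfl hbase, Finset.sum_const]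
    _ = ∑ g : H, ∑ y ∈ s, v (g • y) := Finset.sum_comm
    _ = Fintype.card H • ∑ y ∈ s, v y := by
        simp only [hinv, Finset.sum_const, Finset.card_univ]

namespace SimplexSetting

variable {m : ℕ}

theorem smul_finset_eq_image (σ : alternatingGroup (Fin m)) (e : Finset (Fin m)) :
    σ • e = e.image ⇑(σ : Equiv.Perm (Fin m)) := by
  rw [Finset.smul_finset_def]; rfl

theorem mem_edges {n : ℕ} {e : Finset (Fin m)} :
    e ∈ edges m n ↔ e.card = 2 ∧ ∀ i ∈ e, (i : ℕ) < n := by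
  simp [edges]

theorem mem_edges_self {e : Finset (Fin m)} : e ∈ edges m m ↔ e.card = 2 := by
  simp [mem_edges]

theorem edges_subset_edges_self (n : ℕ) : edges m n ⊆ edges m m := fun _ he =>
  mem_edges_self.2 (mem_edges.1 he).1

theorem smul_mem_edges_self (σ : alternatingGroup (Fin m)) {e : Finset (Fin m)}
    (he : e ∈ edges m m) : σ • e ∈ edges m m := by
  rw [mem_edges_self] at he ⊢
  exact (Finset.card_smul_finset σ e).trans he

theorem edges_self_subset_orbit (hm : 3 ≤ m) {e : Finset (Fin m)} (he : e ∈ edges m m) :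
    (edges m m : Set (Finset (Fin m))) ⊆ MulAction.orbit (alternatingGroup (Fin m)) e := by
  have := Set.powersetCard.isPretransitive_alternatingGroup (α := Fin m) (n := 2)
    (by simpa using hm)
  intro f hf
  obtain ⟨σ, hσ⟩ := MulAction.exists_smul_eq (alternatingGroup (Fin m))
    (⟨e, by simpa using mem_edges_self.1 he⟩ : Set.powersetCard (Fin m) 2)
    ⟨f, by simpa using mem_edges_self.1 hf⟩
  exact ⟨σ, congrArg Subtype.val hσ⟩

theorem card_edges {n : ℕ} (hn : n ≤ m) : (edges m n).card = n.choose 2 := by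
  have : edges m n = Finset.powersetCard 2 {i : Fin m | (i : ℕ) < n} := by
    ext e
    simp only [mem_edges, Finset.mem_powersetCard, Finset.subset_iff, Finset.mem_filter,
      Finset.mem_univ, true_and]
    tauto
  rw [this, Finset.card_powersetCard, Fin.card_filter_val_lt, min_eq_right hn]

theorem choose_two_mul_hr (hm : 2 ≤ m) :
    (m.choose 2 : ℝ) * hr m
      = ((m - 1).choose 2 * Fintype.card (alternatingGroup (Fin m)) : ℕ) := by
  have := Fin.nontrivial_iff_two_le.2 hm
  have hA : ((2 * Fintype.card (alternatingGroup (Fin m)) : ℕ) : ℝ) = m.factorial := by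
    rw [two_mul_card_alternatingGroup, Fintype.card_perm, Fintype.card_fin]
  obtain ⟨k, rfl⟩ : ∃ k, m = k + 1 := ⟨m - 1, by omega⟩
  rw [Nat.factorial_succ] at hA
  simp only [hr, Nat.add_sub_cancel]
  push_cast [Nat.cast_choose_two] at hA ⊢
  linear_combination (-((k : ℝ) * (k - 1) / 4)) * hA

theorem hr_pos (hm : 3 ≤ m) : 0 < hr m := by
  have : (3 : ℝ) ≤ m := by exact_mod_cast hm
  have := (m - 1).factorial_pos
  unfold hr
  exact div_pos (mul_pos (by linarith) (by exact_mod_cast this)) two_pos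

variable {G : Type*} [Group G] (P : SimplexSetting m G)

theorem algAct_eq_mapDomainAlgHom (σ : alternatingGroup (Fin m)) :
    P.algAct σ = MonoidAlgebra.mapDomainAlgHom ℝ ℝ (P.act σ : G →* G) := rfl

theorem lap_eq_Dn_self : lap P.S = P.Dn m := by
  have hmaps : ∀ s ∈ P.S, P.lbl s ∈ edges m m := fun s hs =>
    mem_edges_self.2 (P.lbl_card s hs)
  rw [lap, Dn]
  simp only [De]
  rw [Finset.sum_sub_distrib, ← Nat.cast_sum, Finset.card_eq_sum_card_fiberwise hmaps,
    ← Finset.sum_fiberwise_of_maps_to hmaps]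
  rfl

theorem lbl_act (σ : alternatingGroup (Fin m)) {s : G} (hs : s ∈ P.S) :
    P.lbl (P.act σ s) = σ • P.lbl s := by
  rw [P.lbl_equivariant σ s hs, smul_finset_eq_image]

theorem Se_smul (σ : alternatingGroup (Fin m)) (e : Finset (Fin m)) :
    P.Se (σ • e) = (P.Se e).map (P.act σ).toEquiv.toEmbedding := by
  ext t
  simp only [Se, Finset.mem_map_equiv, Finset.mem_filter]
  have hsymm : (P.act σ).toEquiv.symm t = P.act σ⁻¹ t := by rw [map_inv]; rfl
  rw [hsymm]
  constructor
  · rintro ⟨ht, hl⟩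
    exact ⟨P.act_mem σ⁻¹ t ht, by rw [P.lbl_act σ⁻¹ ht, hl, inv_smul_smul]⟩
  · rintro ⟨hs, hl⟩
    have ht : P.act σ (P.act σ⁻¹ t) = t := by rw [map_inv]; exact MulAut.apply_inv_self _ _ _
    rw [← ht]
    exact ⟨P.act_mem σ _ hs, by rw [P.lbl_act σ hs, hl]⟩

theorem algAct_De (σ : alternatingGroup (Fin m)) (e : Finset (Fin m)) :
    P.algAct σ (P.De e) = P.De (σ • e) := by
  rw [algAct_eq_mapDomainAlgHom, De, De, Se_smul, map_sub, map_natCast, map_sum,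
    Finset.card_map, Finset.sum_map]
  simp [MonoidAlgebra.mapDomainAlgHom_apply]

theorem algAct_Dn (σ : alternatingGroup (Fin m)) (n : ℕ) :
    P.algAct σ (P.Dn n) = ∑ e ∈ edges m n, P.De (σ • e) := by
  rw [Dn, algAct_eq_mapDomainAlgHom, map_sum]
  exact Finset.sum_congr rfl fun e _ => P.algAct_De σ e

theorem card_edges_nsmul_sum_algAct_Dn (hm : 3 ≤ m) (n : ℕ) :
    (edges m m).card • ∑ σ, P.algAct σ (P.Dn n)
      = ((edges m n).card * Fintype.card (alternatingGroup (Fin m))) • lap P.S := by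
  have horbit : ∀ e ∈ edges m n,
      (edges m m).card • ∑ σ : alternatingGroup (Fin m), P.De (σ • e)
        = Fintype.card (alternatingGroup (Fin m)) • lap P.S := fun e he => by
    rw [lap_eq_Dn_self, Dn]
    exact Finset.card_nsmul_sum_smul_of_subset_orbit smul_mem_edges_self
      (edges_self_subset_orbit hm (edges_subset_edges_self n he)) P.De
  calc (edges m m).card • ∑ σ, P.algAct σ (P.Dn n)
      = ∑ e ∈ edges m n, (edges m m).card • ∑ σ : alternatingGroup (Fin m), P.De (σ • e) := by
        rw [Finset.sum_congr rfl fun σ _ => P.algAct_Dn σ n, Finset.sum_comm, Finset.smul_sum]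
    _ = _ := by rw [Finset.sum_congr rfl horbit, Finset.sum_const, mul_smul]

theorem sum_algAct_Dn_pred (hm : 3 ≤ m) :
    ∑ σ, P.algAct σ (P.Dn (m - 1)) = hr m • lap P.S := by
  have hchoose : (m.choose 2 : ℝ) ≠ 0 := Nat.cast_ne_zero.2 (Nat.choose_pos (by omega)).ne'
  have h := P.card_edges_nsmul_sum_algAct_Dn hm (m - 1)
  rw [card_edges le_rfl, card_edges (Nat.sub_le m 1), ← Nat.cast_smul_eq_nsmul ℝ,
    ← Nat.cast_smul_eq_nsmul ℝ, ← choose_two_mul_hr (by omega), mul_smul] at h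
  exact smul_right_injective _ hchoose h

end SimplexSetting

/-- `Δ² - λΔ = (1/h_m²)·(Σ_{σ ∈ A_m} σ(Δ_{m-1}² - λh_mΔ_{m-1}) + X_m)`, where
`X_m = Σ_σ σ(Δ_{m-1})·Σ_{τ ≠ σ} τ(Δ_{m-1})` and `h_m = (m-2)·(m-1)!/2`. -/
theorem lap_sq_sub_smul_decomposition {m : ℕ} {G : Type*} [Group G]
    (P : SimplexSetting m G) (hm : 3 ≤ m) :
    ∀ lambda : ℝ,
      (lap P.S) ^ 2 - lambda • lap P.S =
        ((hr m) ^ 2)⁻¹ •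
          ((∑ σ : alternatingGroup (Fin m),
              P.algAct σ ((P.Dn (m - 1)) ^ 2 - (lambda * hr m) • P.Dn (m - 1))) +
            ∑ σ : alternatingGroup (Fin m),
              P.algAct σ (P.Dn (m - 1)) *
                ∑ τ ∈ Finset.univ.erase σ, P.algAct τ (P.Dn (m - 1))) := by
  intro lambda
  have hterm : ∀ σ, P.algAct σ (P.Dn (m - 1) ^ 2 - (lambda * hr m) • P.Dn (m - 1))
      = P.algAct σ (P.Dn (m - 1)) ^ 2 - (lambda * hr m) • P.algAct σ (P.Dn (m - 1)) :=
    fun σ => by simp only [algAct_eq_mapDomainAlgHom, map_sub, map_pow, map_smul]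
  rw [Finset.sum_congr rfl fun σ _ => hterm σ, Finset.sum_sub_distrib, sub_add_eq_add_sub,
    ← Finset.sq_sum_eq_sum_sq_add_sum_mul_sum_erase, ← Finset.smul_sum, P.sum_algAct_Dn_pred hm,
    eq_inv_smul_iff₀ (pow_ne_zero 2 (hr_pos hm).ne'), smul_pow]
  module
end
end

section
/- Let a ∈ G be an element whose word length with respect to S is at most R, where R > 1 is an integer. Then for every real ε ≥ 2^{2⌈log₂ R⌉}, the element ε·Δ − (2·1 − a⁻¹ − a) lies in Σ²_{⌈R/2⌉} ℝ[G]. -/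
/-!
Write `f a = 2 - a⁻¹ - a` (`lapOf a` below), so that `2Δ = ∑_{s ∈ S} f s` for symmetric `S`. For
`ξ = b⁻¹ - 2 + c` one computes `ξ* ξ = 2 f b + 2 f c - f (b c)`, hence
`4CΔ - f (b c) = 2 (CΔ - f b) + 2 (CΔ - f c) + ξ* ξ` with `ξ` supported in `{b⁻¹, 1, c}`.
Splitting a word of length `R` into two halves of length `⌈R/2⌉` therefore costs a factor `4` per
halving, which gives the constant `4 ^ ⌈log₂ R⌉`. The induction starts at `R = 2` (at `R = 1` the
constant `1` fails for involutive generators): there `4Δ - f (s t) = 2 (2Δ - f s - f t) + ξ* ξ`, and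
`2Δ - f s - f t` is the sum of the `f u` over the remaining generators `u`, using `f s = f s⁻¹`
when `s = t` (if moreover `s = s⁻¹`, then `s t = 1` and `f (s t) = 0`).
-/

noncomputable section

open MonoidAlgebra

variable {G : Type*} [Group G]

lemma starG_eq_mapDomainLinearMap (x : MonoidAlgebra ℝ G) :
    starG x = mapDomainLinearMap ℝ ℝ (fun g : G => g⁻¹) x :=
  rfl

lemma starG_add (x y : MonoidAlgebra ℝ G) : starG (x + y) = starG x + starG y := by
  simp only [starG_eq_mapDomainLinearMap, map_add]

lemma starG_sub (x y : MonoidAlgebra ℝ G) : starG (x - y) = starG x - starG y := by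
  simp only [starG_eq_mapDomainLinearMap, map_sub]

lemma starG_smul (r : ℝ) (x : MonoidAlgebra ℝ G) : starG (r • x) = r • starG x := by
  simp only [starG_eq_mapDomainLinearMap, map_smul]

lemma starG_of (g : G) : starG (of ℝ G g) = of ℝ G g⁻¹ := by
  simp [starG_eq_mapDomainLinearMap, of_apply]

lemma starG_two : starG (2 : MonoidAlgebra ℝ G) = 2 := by
  rw [← one_add_one_eq_two, starG_add, ← map_one (of ℝ G), starG_of, inv_one]

section Ball

variable {S : Set G} {R R' : ℕ} {g : G}

lemma inBall_one (S : Set G) (R : ℕ) : inBall S R (1 : G) :=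
  ⟨[], by simp, by simp, by simp⟩

lemma inBall_of_mem (hg : g ∈ S) (hR : 1 ≤ R) : inBall S R g :=
  ⟨[g], by simpa using hg, by simpa using hR, by simp⟩

lemma inBall.mono (hg : inBall S R g) (h : R ≤ R') : inBall S R' g :=
  let ⟨l, hl, hlen, hprod⟩ := hg
  ⟨l, hl, hlen.trans h, hprod⟩

lemma inBall.inv (hsymm : ∀ s ∈ S, s⁻¹ ∈ S) (hg : inBall S R g) : inBall S R g⁻¹ := by
  obtain ⟨l, hl, hlen, rfl⟩ := hg
  refine ⟨(l.map (·⁻¹)).reverse, ?_, by simpa using hlen, (List.prod_inv_reverse l).symm⟩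
  simp only [List.mem_reverse, List.mem_map]
  rintro _ ⟨x, hx, rfl⟩
  exact hsymm x (hl x hx)

lemma inBall.exists_mul_eq {m n : ℕ} (hg : inBall S (m + n) g) :
    ∃ b c, inBall S m b ∧ inBall S n c ∧ b * c = g := by
  obtain ⟨l, hl, hlen, rfl⟩ := hg
  refine ⟨(l.take m).prod, (l.drop m).prod, ⟨l.take m, ?_, ?_, rfl⟩, ⟨l.drop m, ?_, ?_, rfl⟩,
    List.prod_take_mul_prod_drop l m⟩
  · exact fun x hx => hl x (List.mem_of_mem_take hx)
  · simp
  · exact fun x hx => hl x (List.mem_of_mem_drop hx)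
  · simp; omega

end Ball

section Cone

def sosCone (S : Set G) (R : ℕ) : AddSubmonoid (MonoidAlgebra ℝ G) where
  carrier := {x | SOS S R x}
  zero_mem' := ⟨0, Fin.elim0, fun i => i.elim0, by simp⟩
  add_mem' := by
    rintro _ _ ⟨N, ξ, hξ, rfl⟩ ⟨M, η, hη, rfl⟩
    refine ⟨N + M, Fin.append ξ η, Fin.addCases (by simpa using hξ) (by simpa using hη), ?_⟩
    simp [Fin.sum_univ_add]

variable {S : Set G} {R R' : ℕ}

lemma starG_mul_self_mem_sosCone {ξ : MonoidAlgebra ℝ G}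
    (hξ : ∀ g ∈ ξ.coeff.support, inBall S R g) : starG ξ * ξ ∈ sosCone S R :=
  ⟨1, fun _ => ξ, fun _ => hξ, by simp⟩

lemma smul_mem_sosCone {c : ℝ} (hc : 0 ≤ c) {x : MonoidAlgebra ℝ G} (hx : x ∈ sosCone S R) :
    c • x ∈ sosCone S R := by
  obtain ⟨N, ξ, hξ, rfl⟩ := hx
  refine ⟨N, fun i => √c • ξ i, fun i g hg => hξ i g (Finsupp.support_smul hg), ?_⟩
  simp only [Finset.smul_sum, starG_smul, smul_mul_smul, Real.mul_self_sqrt hc]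

lemma sosCone_mono (h : R ≤ R') : sosCone S R ≤ sosCone S R' :=
  fun _ ⟨N, ξ, hξ, hx⟩ => ⟨N, ξ, fun i g hg => (hξ i g hg).mono h, hx⟩

end Cone

section Lap

def lapOf (a : G) : MonoidAlgebra ℝ G :=
  2 - of ℝ G a⁻¹ - of ℝ G a

lemma lapOf_one : lapOf (1 : G) = 0 := by
  rw [lapOf, inv_one, map_one, ← one_add_one_eq_two]
  abel

lemma lapOf_inv (a : G) : lapOf a⁻¹ = lapOf a := by
  rw [lapOf, lapOf, inv_inv]
  abel

lemma support_coeff_of_subset (g : G) : (of ℝ G g).coeff.support ⊆ {g} := by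
  rw [of_apply, coeff_single]
  exact Finsupp.support_single_subset

lemma starG_one_sub_of_mul_self (a : G) :
    starG (1 - of ℝ G a) * (1 - of ℝ G a) = lapOf a := by
  rw [starG_sub, ← map_one (of ℝ G), starG_of, starG_of, inv_one, lapOf]
  simp only [sub_mul, mul_sub, ← map_mul, inv_mul_cancel, one_mul, mul_one, map_one]
  rw [← one_add_one_eq_two]
  abel

lemma lapOf_mem_sosCone {S : Set G} {R : ℕ} {a : G} (ha : inBall S R a) :
    lapOf a ∈ sosCone S R := by
  classical
  rw [← starG_one_sub_of_mul_self]
  refine starG_mul_self_mem_sosCone fun g hg => ?_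
  rw [← map_one (of ℝ G), coeff_sub] at hg
  rcases Finset.mem_union.1 (Finsupp.support_sub hg) with hg | hg
  · rw [Finset.mem_singleton.1 (support_coeff_of_subset 1 hg)]
    exact inBall_one S R
  · rwa [Finset.mem_singleton.1 (support_coeff_of_subset a hg)]

lemma starG_of_inv_sub_two_add_of_mul_self (b c : G) :
    starG (of ℝ G b⁻¹ - 2 + of ℝ G c) * (of ℝ G b⁻¹ - 2 + of ℝ G c)
      = (2 : ℝ) • lapOf b + (2 : ℝ) • lapOf c - lapOf (b * c) := by
  rw [starG_add, starG_sub, starG_two, starG_of, starG_of, inv_inv, lapOf, lapOf, lapOf, mul_inv_rev]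
  simp only [mul_add, add_mul, sub_mul, mul_sub, ← map_mul, mul_inv_cancel, inv_mul_cancel,
    map_one, two_mul, mul_two, two_smul]
  rw [← one_add_one_eq_two]
  abel

lemma eq_of_mem_support_of_inv_sub_two_add_of {b c g : G}
    (hg : g ∈ (of ℝ G b⁻¹ - 2 + of ℝ G c).coeff.support) : g = b⁻¹ ∨ g = 1 ∨ g = c := by
  classical
  rw [← one_add_one_eq_two, ← map_one (of ℝ G), coeff_add, coeff_sub, coeff_add] at hg
  have hsupp := Finsupp.support_add.trans (Finset.union_subset_union
    (Finsupp.support_sub.trans (Finset.union_subset_union (support_coeff_of_subset b⁻¹)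
      (Finsupp.support_add.trans (Finset.union_subset_union (support_coeff_of_subset 1) (support_coeff_of_subset 1)))))
    (support_coeff_of_subset c)) hg
  simp only [Finset.mem_union, Finset.mem_singleton, or_self] at hsupp
  tauto

lemma sub_lapOf_mul_mem_sosCone {S : Set G} (hsymm : ∀ s ∈ S, s⁻¹ ∈ S) {R : ℕ} {b c : G}
    (hb : inBall S R b) (hc : inBall S R c) {D : MonoidAlgebra ℝ G}
    (hD : D - (2 : ℝ) • lapOf b - (2 : ℝ) • lapOf c ∈ sosCone S R) :
    D - lapOf (b * c) ∈ sosCone S R := by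
  have hξ := starG_mul_self_mem_sosCone (S := S) (R := R) (ξ := of ℝ G b⁻¹ - 2 + of ℝ G c)
    fun g hg => by
      rcases eq_of_mem_support_of_inv_sub_two_add_of hg with rfl | rfl | rfl
      exacts [hb.inv hsymm, inBall_one S R, hc]
  rw [starG_of_inv_sub_two_add_of_mul_self] at hξ
  convert add_mem hD hξ using 1
  abel

lemma sum_lapOf_mem_sosCone {S T : Finset G} (hT : T ⊆ S) {R : ℕ} (hR : 1 ≤ R) :
    ∑ u ∈ T, lapOf u ∈ sosCone (↑S) R :=
  sum_mem fun _ hu => lapOf_mem_sosCone (inBall_of_mem (Finset.mem_coe.2 (hT hu)) hR)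

variable {S : Finset G} (hsymm : ∀ s ∈ S, s⁻¹ ∈ S)
include hsymm

lemma two_smul_lap : (2 : ℝ) • lap S = ∑ s ∈ S, lapOf s := by
  have hinv : ∑ s ∈ S, of ℝ G s⁻¹ = ∑ s ∈ S, of ℝ G s :=
    Finset.sum_nbij' (·⁻¹) (·⁻¹) (fun s hs => hsymm s hs) (fun s hs => hsymm s hs)
      (fun s _ => inv_inv s) (fun s _ => inv_inv s) (fun _ _ => rfl)
  simp only [lapOf, Finset.sum_sub_distrib, hinv, lap, Finset.sum_const, smul_sub]
  rw [two_smul, two_smul, nsmul_eq_mul, mul_two]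
  abel

lemma smul_lap_mem_sosCone {c : ℝ} (hc : 0 ≤ c) {R : ℕ} (hR : 1 ≤ R) :
    c • lap S ∈ sosCone (↑S) R := by
  have h := smul_mem_sosCone (c := c / 2) (by positivity) (sum_lapOf_mem_sosCone (subset_refl S) hR)
  rwa [← two_smul_lap hsymm, smul_smul, div_mul_cancel₀ c two_ne_zero] at h

lemma two_smul_lap_sub_sum_lapOf_mem_sosCone {T : Finset G} (hT : T ⊆ S) :
    (2 : ℝ) • lap S - ∑ u ∈ T, lapOf u ∈ sosCone (↑S) 1 := by
  classical
  rw [two_smul_lap hsymm, ← Finset.sum_sdiff hT, add_sub_cancel_right]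
  exact sum_lapOf_mem_sosCone Finset.sdiff_subset le_rfl

lemma exists_subset_sum_lapOf_eq_add {s t : G} (hs : s ∈ S) (ht : t ∈ S) (hst : s * t ≠ 1) :
    ∃ T ⊆ S, ∑ u ∈ T, lapOf u = lapOf s + lapOf t := by
  classical
  by_cases h : s = t
  · subst h
    have hne : s ≠ s⁻¹ := fun h => hst (by rw [← mul_inv_cancel s, ← h])
    refine ⟨{s, s⁻¹}, Finset.insert_subset hs (Finset.singleton_subset_iff.2 (hsymm s hs)), ?_⟩
    rw [Finset.sum_pair hne, lapOf_inv]
  · exact ⟨{s, t}, Finset.insert_subset hs (Finset.singleton_subset_iff.2 ht), Finset.sum_pair h⟩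

lemma four_smul_lap_sub_lapOf_mem_sosCone {a : G} (ha : inBall (↑S) 2 a) :
    (4 : ℝ) • lap S - lapOf a ∈ sosCone (↑S) 1 := by
  have h4 : (4 : ℝ) • lap S ∈ sosCone (↑S) 1 := smul_lap_mem_sosCone hsymm (by norm_num) le_rfl
  have h2 : (2 : ℝ) • lap S ∈ sosCone (↑S) 1 := smul_lap_mem_sosCone hsymm (by norm_num) le_rfl
  have hsub {T : Finset G} (hT : T ⊆ S) := two_smul_lap_sub_sum_lapOf_mem_sosCone hsymm hT
  obtain ⟨l, hl, hlen, rfl⟩ := ha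
  match l, hl, hlen with
  | [], _, _ => simpa [lapOf_one] using h4
  | [s], hl, _ =>
    convert add_mem h2 (hsub (T := {s}) (by simpa using hl)) using 1
    simp only [List.prod_cons, List.prod_nil, mul_one, Finset.sum_singleton]
    module
  | [s, t], hl, _ =>
    have hs : s ∈ S := hl s (by simp)
    have ht : t ∈ S := hl t (by simp)
    simp only [List.prod_cons, List.prod_nil, mul_one]
    by_cases hst : s * t = 1
    · rwa [hst, lapOf_one, sub_zero]
    refine sub_lapOf_mul_mem_sosCone hsymm (inBall_of_mem hs le_rfl) (inBall_of_mem ht le_rfl) ?_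
    obtain ⟨T, hT, hsum⟩ := exists_subset_sum_lapOf_eq_add hsymm hs ht hst
    convert smul_mem_sosCone (c := 2) (by norm_num) (hsub hT) using 1
    rw [hsum]
    module

theorem pow_four_clog_smul_lap_sub_lapOf_mem_sosCone {R : ℕ} (hR : 2 ≤ R) {a : G}
    (ha : inBall (↑S) R a) :
    (4 : ℝ) ^ Nat.clog 2 R • lap S - lapOf a ∈ sosCone (↑S) ((R + 1) / 2) := by
  induction R using Nat.strong_induction_on generalizing a with
  | _ R ih =>
  obtain rfl | hR3 := hR.eq_or_lt
  · rw [Nat.clog_eq_one le_rfl le_rfl, pow_one]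
    exact four_smul_lap_sub_lapOf_mem_sosCone hsymm ha
  set R' := (R + 1) / 2
  obtain ⟨b, c, hb, hc, rfl⟩ := (ha.mono (show R ≤ R' + R' by omega)).exists_mul_eq
  have hmono := sosCone_mono (S := (↑S : Set G)) (show (R' + 1) / 2 ≤ R' by omega)
  have hb' := hmono (ih R' (by omega) (by omega) hb)
  have hc' := hmono (ih R' (by omega) (by omega) hc)
  refine sub_lapOf_mul_mem_sosCone hsymm hb hc ?_
  convert add_mem (smul_mem_sosCone zero_le_two hb') (smul_mem_sosCone zero_le_two hc') using 1
  have hclog : Nat.clog 2 R = Nat.clog 2 R' + 1 := Nat.clog_of_two_le one_lt_two hR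
  rw [hclog, pow_succ]
  module

end Lap

end

theorem eps_lap_sub_two_sub_a_general {G : Type*} [Group G] (S : Finset G)
    (hsymm : ∀ s ∈ S, s⁻¹ ∈ S)
    (a : G) (R : ℕ) (hR : 1 < R) (ha : inBall (↑S) R a)
    (eps : ℝ) (heps : (2 : ℝ) ^ (2 * Nat.clog 2 R) ≤ eps) :
    SOS (↑S) ((R + 1) / 2)
      (eps • lap S -
        ((2 : MonoidAlgebra ℝ G) - MonoidAlgebra.of ℝ G a⁻¹ - MonoidAlgebra.of ℝ G a)) := by
  show eps • lap S - lapOf a ∈ sosCone (↑S) ((R + 1) / 2)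
  have h4 : (4 : ℝ) ^ Nat.clog 2 R ≤ eps := by
    rw [pow_mul] at heps
    norm_num at heps
    exact heps
  rw [show eps • lap S - lapOf a = ((4 : ℝ) ^ Nat.clog 2 R • lap S - lapOf a)
    + (eps - 4 ^ Nat.clog 2 R) • lap S by module]
  exact add_mem (pow_four_clog_smul_lap_sub_lapOf_mem_sosCone hsymm hR ha)
    (smul_lap_mem_sosCone hsymm (sub_nonneg.2 h4) (by omega))

/-- If `a ∈ G` has word length at most `R > 1`, then for every
`ε ≥ 2^(2⌈log₂ R⌉)` the element `εΔ - (2 - a⁻¹ - a)` lies in `Σ²_{⌈R/2⌉} ℝ[G]`. -/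
theorem eps_lap_sub_two_sub_a {G : Type*} [Group G] (S : Finset G)
    (h1 : (1 : G) ∉ S) (hsymm : ∀ s ∈ S, s⁻¹ ∈ S)
    (hgen : Subgroup.closure (S : Set G) = ⊤)
    (a : G) (R : ℕ) (hR : 1 < R) (ha : inBall (↑S) R a)
    (eps : ℝ) (heps : (2 : ℝ) ^ (2 * Nat.clog 2 R) ≤ eps) :
    SOS (↑S) ((R + 1) / 2)
      (eps • lap S -
        ((2 : MonoidAlgebra ℝ G) - MonoidAlgebra.of ℝ G a⁻¹ - MonoidAlgebra.of ℝ G a)) :=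
  eps_lap_sub_two_sub_a_general S hsymm a R hR ha eps heps
end
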